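/- Let (V, E, p) be a Min-p-Union instance with optimal value opt (the minimum of |⋃_{e∈E'} e| over all E' ⊆ E with |E'| = p). Suppose for each k ∈ {1,…,|V|} we are given a vertex set V_k ⊆ V with |V_k| ≤ βk and |E(V_k)| ≥ α·opt_k, where opt_k is the maximum of |E(W)| over all W ⊆ V with |W| ≤ k, and α, β ≥ 1. Let ℓ be the smallest index with |E(V_ℓ)| ≥ αp. Then ℓ exists, ℓ ≤ opt, and |V_ℓ| ≤ β·opt; in particular, E(V_ℓ) is a set of at least αp hyperedges whose union has size at most β·opt. -/
import Mathlib


/-- The reduction from bicriteria DkSH solutions to a bicriteria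
Min-p-Union solution: the least index ℓ with |E(V_ℓ)| ≥ αp exists, satisfies
ℓ ≤ opt, |V_ℓ| ≤ β·opt, and E(V_ℓ) contains at least αp hyperedges whose union
has size at most β·opt. -/
theorem stmt_1 {γ : Type*} [DecidableEq γ] (V : Finset γ) (E : Finset (Finset γ))
    (hE : ∀ e ∈ E, e ⊆ V) (p : ℕ) (hp1 : 1 ≤ p) (hp2 : p ≤ E.card)
    (α β : ℝ) (hα : 1 ≤ α) (hβ : 1 ≤ β)
    (opt : ℕ)
    (hopt : IsLeast {n | ∃ E' ⊆ E, E'.card = p ∧ (E'.biUnion id).card = n} opt)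
    (hopt1 : 1 ≤ opt)
    (optk : ℕ → ℕ)
    (hoptk : ∀ k, IsGreatest
      {n | ∃ W ⊆ V, W.card ≤ k ∧ (E.filter (fun e => e ⊆ W)).card = n} (optk k))
    (Vk : ℕ → Finset γ)
    (hVk : ∀ k, 1 ≤ k → k ≤ V.card →
      ((Vk k).card : ℝ) ≤ β * k ∧ α * optk k ≤ ((E.filter (fun e => e ⊆ Vk k)).card : ℝ)) :
    ∃ ℓ, IsLeast {k | 1 ≤ k ∧ k ≤ V.card ∧
        α * p ≤ ((E.filter (fun e => e ⊆ Vk k)).card : ℝ)} ℓ ∧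
      ℓ ≤ opt ∧ ((Vk ℓ).card : ℝ) ≤ β * opt ∧
      α * p ≤ ((E.filter (fun e => e ⊆ Vk ℓ)).card : ℝ) ∧
      (((E.filter (fun e => e ⊆ Vk ℓ)).biUnion id).card : ℝ) ≤ β * opt := by
  obtain ⟨⟨E', hE'E, hE'card, hE'union⟩, hoptle⟩ := hopt
  set W : Finset γ := E'.biUnion id with hW
  have hWV : W ⊆ V := by
    intro x hx
    obtain ⟨e, he, hxe⟩ := Finset.mem_biUnion.mp hx
    exact hE e (hE'E he) hxe
  have hoptV : opt ≤ V.card := hE'union ▸ Finset.card_le_card hWV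
  have hpopt : p ≤ optk opt := by
    have hE'sub : E' ⊆ E.filter (fun e => e ⊆ W) := by
      intro e he
      refine Finset.mem_filter.mpr ⟨hE'E he, ?_⟩
      intro x hx
      exact Finset.mem_biUnion.mpr ⟨e, he, hx⟩
    have h1 : p ≤ (E.filter (fun e => e ⊆ W)).card :=
      hE'card ▸ Finset.card_le_card hE'sub
    exact h1.trans ((hoptk opt).2 ⟨W, hWV, hE'union.le, rfl⟩)
  have hαpos : (0:ℝ) ≤ α := le_trans zero_le_one hα
  have hoptmem : opt ∈ {k | 1 ≤ k ∧ k ≤ V.card ∧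
      α * p ≤ ((E.filter (fun e => e ⊆ Vk k)).card : ℝ)} := by
    refine ⟨hopt1, hoptV, ?_⟩
    have h2 := (hVk opt hopt1 hoptV).2
    refine le_trans ?_ h2
    exact mul_le_mul_of_nonneg_left (by exact_mod_cast hpopt) hαpos
  have hne : {k | 1 ≤ k ∧ k ≤ V.card ∧
      α * p ≤ ((E.filter (fun e => e ⊆ Vk k)).card : ℝ)}.Nonempty := ⟨opt, hoptmem⟩
  set S := {k | 1 ≤ k ∧ k ≤ V.card ∧
      α * p ≤ ((E.filter (fun e => e ⊆ Vk k)).card : ℝ)} with hS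
  set ℓ := sInf S with hℓ
  refine ⟨ℓ, ⟨Nat.sInf_mem hne, fun b hb => Nat.sInf_le hb⟩, ?_⟩
  obtain ⟨hl1, hlV, hlp⟩ := Nat.sInf_mem hne
  have hlopt : ℓ ≤ opt := Nat.sInf_le hoptmem
  have hcard : ((Vk ℓ).card : ℝ) ≤ β * opt := by
    calc ((Vk ℓ).card : ℝ) ≤ β * ℓ := (hVk ℓ hl1 hlV).1
      _ ≤ β * opt := by
        apply mul_le_mul_of_nonneg_left _ (le_trans zero_le_one hβ)
        exact_mod_cast hlopt
  refine ⟨hlopt, hcard, hlp, ?_⟩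
  have hsub : (E.filter (fun e => e ⊆ Vk ℓ)).biUnion id ⊆ Vk ℓ := by
    intro x hx
    obtain ⟨e, he, hxe⟩ := Finset.mem_biUnion.mp hx
    exact (Finset.mem_filter.mp he).2 hxe
  calc (((E.filter (fun e => e ⊆ Vk ℓ)).biUnion id).card : ℝ)
      ≤ ((Vk ℓ).card : ℝ) := by exact_mod_cast Finset.card_le_card hsub
    _ ≤ β * opt := hcard
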